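/- arXiv:1209.4398 — 2 statements merged into one kernel-verified Lean document; each statement's English description precedes it below -/
import Mathlib

section
/- Let Γ = (C, X, H, I, η, E) be a Galois structure satisfying conditions (E4), (E5), (M) and (B) as above. Then I : C → X preserves every pullback of f ∈ E along a split epimorphism g ∈ E. -/
/-!
Let `c : HI(D') ⟶ Q` compare the image of the square with the pullback `Q` of `HI(f)` along
`HI(g)`. Applying (E5) to the split epimorphism of arrows `(t, g) : h ⟶ f` gives `c ∈ E`, so
`w = η_{D'} ≫ c` is a monadic extension by (M). Descent along `w` yields a section `r` of `c` with
`w ≫ r = η_{D'}` as soon as `η_{D'}` coequalises the kernel pair of `w`, and then `r` is inverse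
to `c` because maps out of `HI(D')` are determined by precomposition with `η_{D'}`.

A pair identified by `w` is identified by `η_{D'}` after pulling back along a morphism of `E`:
(B) lifts the `η`-relation along `h`, and (E5), applied to the relations `K[f] ∩ K[η_A]` and
`K[h] ∩ K[η_{D'}]`, lifts it along `t`. (E4) and (M) turn this covered inclusion
`K[η_{D'}] ⊆ K[w]` into an equality.
-/

open CategoryTheory CategoryTheory.Limits

universe v u v' u'

namespace GaloisPaper

variable {C : Type u} [Category.{v} C]

/-- The class `E¹` of "double extensions" relative to a class `F` of morphisms:
a commutative square (i.e. a morphism `σ : a ⟶ b` of the arrow category) with all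
four arrows in `F`, such that the comparison morphism to the pullback lies in `F`. -/
def InE1 (F : MorphismProperty C) : MorphismProperty (Arrow C) := fun a b σ =>
  F a.hom ∧ F b.hom ∧ F σ.left ∧ F σ.right ∧
    ∃ (P : C) (p₁ : P ⟶ a.right) (p₂ : P ⟶ b.left) (l : a.left ⟶ P),
      IsPullback p₁ p₂ σ.right b.hom ∧ l ≫ p₁ = a.hom ∧ l ≫ p₂ = σ.left ∧ F l

/-- (E1): `F` contains all isomorphisms (between objects satisfying `O`). -/
def CondE1 (O : C → Prop) (F : MorphismProperty C) : Prop :=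
  ∀ ⦃a b : C⦄ (σ : a ⟶ b), O a → O b → IsIso σ → F σ

/-- (E2): `F` is pullback-stable: pullbacks of morphisms of `F` along arbitrary
morphisms (between objects satisfying `O`) exist and lie in `F`. -/
def CondE2 (O : C → Prop) (F : MorphismProperty C) : Prop :=
  ∀ ⦃a b : C⦄ (σ : a ⟶ b), F σ → ∀ ⦃c : C⦄ (g : c ⟶ b), O c →
    (∃ (d : C) (q₁ : d ⟶ a) (q₂ : d ⟶ c), O d ∧ IsPullback q₁ q₂ σ g ∧ F q₂) ∧
    (∀ ⦃d : C⦄ (q₁ : d ⟶ a) (q₂ : d ⟶ c), O d → IsPullback q₁ q₂ σ g → F q₂)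

/-- (E3): `F` is closed under composition. -/
def CondE3 (F : MorphismProperty C) : Prop :=
  ∀ ⦃a b c : C⦄ (σ : a ⟶ b) (τ : b ⟶ c), F σ → F τ → F (σ ≫ τ)

/-- (E4): if `σ ≫ τ ∈ F` then `τ ∈ F`. -/
def CondE4 (O : C → Prop) (F : MorphismProperty C) : Prop :=
  ∀ ⦃a b c : C⦄ (σ : a ⟶ b) (τ : b ⟶ c), O a → O b → O c → F (σ ≫ τ) → F τ

/-- (E5): every split epimorphism of `Ext(C)` (i.e. every morphism of the arrow
category between `F`-arrows admitting a section) lies in `F¹`. -/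
def CondE5 (F : MorphismProperty C) : Prop :=
  ∀ ⦃a b : Arrow C⦄ (σ : a ⟶ b) (τ : b ⟶ a), τ ≫ σ = 𝟙 b → F a.hom → F b.hom → InE1 F σ

/-- `(C ↓ B)`: the full subcategory of `Over B` on morphisms in `F`. -/
def EOver (F : MorphismProperty C) (B : C) :=
  ObjectProperty.FullSubcategory (fun f : Over B => F f.hom)

instance (F : MorphismProperty C) (B : C) : Category (EOver F B) :=
  ObjectProperty.FullSubcategory.category _

/-- `Σ_p`: composition with `p`, as a functor `(C ↓ A) ⥤ (C ↓ B)`. -/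
def eMap (F : MorphismProperty C) {A B : C} (p : A ⟶ B)
    (hcomp : ∀ ⦃Z : C⦄ (f : Z ⟶ A), F f → F (f ≫ p)) : EOver F A ⥤ EOver F B :=
  ObjectProperty.lift _ (ObjectProperty.ι _ ⋙ Over.map p)
    (fun f => hcomp f.obj.hom f.property)

/-- `p` is a monadic extension (effective `F`-descent morphism): `p ∈ F` and the
pullback functor `p* : (C ↓ B) ⥤ (C ↓ A)` (i.e. the right adjoint of `Σ_p`) is monadic. -/
def IsMonadicExt (F : MorphismProperty C) {A B : C} (p : A ⟶ B) : Prop :=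
  F p ∧ ∃ (hcomp : ∀ ⦃Z : C⦄ (f : Z ⟶ A), F f → F (f ≫ p))
    (G : EOver F B ⥤ EOver F A) (_ : eMap F p hcomp ⊣ G),
    Nonempty (MonadicRightAdjoint G)

/-- `u : e ⟶ r` exhibits `r` as a reflection of `e` into the full subcategory
determined by `P`. -/
def IsReflectionInto {D : Type u'} [Category.{v'} D] (P : D → Prop) {e r : D}
    (u : e ⟶ r) : Prop :=
  P r ∧ ∀ ⦃a : D⦄, P a → ∀ k : e ⟶ a, ∃! m : r ⟶ a, u ≫ m = k

/-- A Galois structure `(C, X, H, I, η, E)` as in Janelidze–Kelly: a full replete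
reflective subcategory together with a class `E` satisfying (E1)–(E3) and (G). -/
structure GaloisStructure (C : Type u) [Category.{v} C] (X : Type u') [Category.{v'} X] where
  H : X ⥤ C
  I : C ⥤ X
  adj : I ⊣ H
  hFull : H.Full
  hFaithful : H.Faithful
  E : MorphismProperty C
  hE1 : CondE1 (fun _ => True) E
  hE2 : CondE2 (fun _ => True) E
  hE3 : CondE3 E
  hG : ∀ ⦃A B : C⦄ (f : A ⟶ B), E f → E (H.map (I.map f))

namespace GaloisStructure

variable {X : Type u'} [Category.{v'} X] (Γ : GaloisStructure C X)

/-- The component `η_A : A ⟶ HI(A)` of the reflection unit. -/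
def unitApp (A : C) : A ⟶ Γ.H.obj (Γ.I.obj A) := Γ.adj.unit.app A

/-- A trivial covering: `f ∈ E` whose `η`-naturality square is a pullback. -/
def TrivCov {A B : C} (f : A ⟶ B) : Prop :=
  Γ.E f ∧ IsPullback (Γ.unitApp A) f (Γ.H.map (Γ.I.map f)) (Γ.unitApp B)

/-- `f` is split by `p`: the pullback `p*(f)` of `f` along `p` is a trivial covering. -/
def IsSplitBy {A B E' : C} (f : A ⟶ B) (p : E' ⟶ B) : Prop :=
  ∀ ⦃P : C⦄ (p₁ : P ⟶ A) (p₂ : P ⟶ E'), IsPullback p₁ p₂ f p → Γ.TrivCov p₂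

/-- A covering (central extension): a morphism of `E` split by some monadic extension. -/
def Covering {A B : C} (f : A ⟶ B) : Prop :=
  Γ.E f ∧ ∃ (E' : C) (p : E' ⟶ B), IsMonadicExt Γ.E p ∧ Γ.IsSplitBy f p

/-- A normal extension: a monadic extension split by itself. -/
def NormalExt {A B : C} (p : A ⟶ B) : Prop :=
  IsMonadicExt Γ.E p ∧ Γ.IsSplitBy p p

/-- (M): every morphism of `E` is a monadic extension. -/
def CondM : Prop := ∀ ⦃A B : C⦄ (p : A ⟶ B), Γ.E p → IsMonadicExt Γ.E p

/-- Admissibility of the Galois structure: the right adjoints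
`H^B : (X ↓ I(B)) ⥤ (C ↓ B)` are fully faithful.  Equivalently (and this is how we
state it), for every `φ : x ⟶ I(B)` with `H(φ) ∈ E` and every pullback of `H(φ)`
along `η_B`, the corresponding component of the counit of `I^B ⊣ H^B`, i.e. the
adjoint transpose `I(A) ⟶ x` of `t : A ⟶ H(x)`, is an isomorphism. -/
def Admissible : Prop :=
  ∀ ⦃B : C⦄ ⦃x : X⦄ (φ : x ⟶ Γ.I.obj B), Γ.E (Γ.H.map φ) →
    ∀ ⦃A : C⦄ (t : A ⟶ Γ.H.obj x) (f : A ⟶ B),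
      IsPullback t f (Γ.H.map φ) (Γ.unitApp B) →
      IsIso ((Γ.adj.homEquiv A x).symm t)

/-- The `η`-naturality square at `f`, as a morphism of the arrow category. -/
def unitSq {A B : C} (f : A ⟶ B) : Arrow.mk f ⟶ Arrow.mk (Γ.H.map (Γ.I.map f)) :=
  Arrow.homMk (u := Γ.unitApp A) (v := Γ.unitApp B)
    (by simp [unitApp])

/-- (B): `X` is a strongly `E`-Birkhoff subcategory of `C`: every `η`-naturality
square at a morphism of `E` lies in `E¹`. -/
def StronglyBirkhoff : Prop :=
  ∀ ⦃A B : C⦄ (f : A ⟶ B), Γ.E f → InE1 Γ.E (Γ.unitSq f)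

/-- `I` preserves pullbacks of morphisms of `E` along split epimorphisms of `E`. -/
def PreservesSplitPullbacks : Prop :=
  ∀ ⦃D' A B C' : C⦄ (t : D' ⟶ A) (h : D' ⟶ C') (f : A ⟶ B) (g : C' ⟶ B),
    IsPullback t h f g → Γ.E f → Γ.E g → IsSplitEpi g →
    IsPullback (Γ.I.map t) (Γ.I.map h) (Γ.I.map f) (Γ.I.map g)

end GaloisStructure

/-- The class of regular epimorphisms. -/
def regEpi (C : Type u) [Category.{v} C] : MorphismProperty C :=
  fun _ _ f => Nonempty (RegularEpi f)

/-- A pair of parallel morphisms is jointly monic. -/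
def JointlyMono {R A : C} (d₀ d₁ : R ⟶ A) : Prop :=
  ∀ ⦃T : C⦄ (x y : T ⟶ R), x ≫ d₀ = y ≫ d₀ → x ≫ d₁ = y ≫ d₁ → x = y

/-- An internal reflexive relation (given by its jointly monic pair of projections). -/
def IsReflexiveRel {R A : C} (d₀ d₁ : R ⟶ A) : Prop :=
  JointlyMono d₀ d₁ ∧ ∃ r : A ⟶ R, r ≫ d₀ = 𝟙 A ∧ r ≫ d₁ = 𝟙 A

/-- An internal equivalence relation. -/
def IsEquivRel {R A : C} (d₀ d₁ : R ⟶ A) : Prop :=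
  IsReflexiveRel d₀ d₁ ∧ (∃ s : R ⟶ R, s ≫ d₀ = d₁ ∧ s ≫ d₁ = d₀) ∧
    ∀ ⦃T : C⦄ (x y : T ⟶ R), x ≫ d₁ = y ≫ d₀ →
      ∃ t : T ⟶ R, t ≫ d₀ = x ≫ d₀ ∧ t ≫ d₁ = y ≫ d₁

/-- A Mal'tsev category: every internal reflexive relation is an equivalence relation. -/
def IsMaltsevCat (C : Type u) [Category.{v} C] : Prop :=
  ∀ ⦃A R : C⦄ (d₀ d₁ : R ⟶ A), IsReflexiveRel d₀ d₁ → IsEquivRel d₀ d₁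

/-- A regular category: finite limits (assumed separately), regular epi–mono
factorisations, and pullback-stability of regular epimorphisms. -/
structure IsRegularCategory (C : Type u) [Category.{v} C] : Prop where
  factor : ∀ ⦃A B : C⦄ (f : A ⟶ B), ∃ (I' : C) (e : A ⟶ I') (m : I' ⟶ B),
    f = e ≫ m ∧ Nonempty (RegularEpi e) ∧ Mono m
  stable : ∀ ⦃P' X' Y' Z' : C⦄ (p₁ : P' ⟶ X') (p₂ : P' ⟶ Y') (f : X' ⟶ Z') (g : Y' ⟶ Z'),
    IsPullback p₁ p₂ f g → Nonempty (RegularEpi f) → Nonempty (RegularEpi p₂)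

/-- A Barr-exact category: regular, and every internal equivalence relation is
effective (i.e. a kernel pair). -/
def IsBarrExact (C : Type u) [Category.{v} C] : Prop :=
  IsRegularCategory C ∧ ∀ ⦃A R : C⦄ (d₀ d₁ : R ⟶ A), IsEquivRel d₀ d₁ →
    ∃ (Q : C) (q : A ⟶ Q), IsPullback d₀ d₁ q q

/-- A Birkhoff subcategory: a full reflective subcategory closed under subobjects
and regular quotient objects. -/
structure IsBirkhoff {X : Type u'} [Category.{v'} X] (H : X ⥤ C) (I : C ⥤ X)
    (adj : I ⊣ H) : Prop where
  full : H.Full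
  faithful : H.Faithful
  closedSub : ∀ (x : X) (A : C) (m : A ⟶ H.obj x), Mono m → ∃ y : X, Nonempty (A ≅ H.obj y)
  closedQuot : ∀ (x : X) (A : C) (e : H.obj x ⟶ A), Nonempty (RegularEpi e) →
    ∃ y : X, Nonempty (A ≅ H.obj y)

/-- The category `Ext(C)` of `F`-morphisms. -/
def ExtCat (F : MorphismProperty C) := ObjectProperty.FullSubcategory (fun a : Arrow C => F a.hom)

instance (F : MorphismProperty C) : Category (ExtCat F) := ObjectProperty.FullSubcategory.category _

/-- The restriction of `F¹` to the category `Ext(C)`. -/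
def ExtE1 (F : MorphismProperty C) : MorphismProperty (ExtCat F) :=
  fun _ _ σ => InE1 F ((ObjectProperty.ι _).map σ)

theorem _root_.CategoryTheory.Adjunction.exists_counit_comp_eq_of_monadic
    {D₁ D₂ : Type*} [Category D₁] [Category D₂] {L : D₁ ⥤ D₂} {G : D₂ ⥤ D₁}
    (adj : L ⊣ G) [MonadicRightAdjoint G] {X Y : D₂} (ρ : L.obj (G.obj X) ⟶ Y)
    (hρ : adj.counit.app (L.obj (G.obj X)) ≫ ρ = L.map (G.map (adj.counit.app X)) ≫ ρ) :
    ∃ r : X ⟶ Y, adj.counit.app X ≫ r = ρ := by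
  -- `ρ` transposes to a morphism of algebras for the monad of `monadicAdjunction G`, whose
  -- comparison functor is full; `κ` identifies its left adjoint with `L`.
  let κ := (Adjunction.leftAdjointUniq (monadicAdjunction G) adj).hom
  let φ : G.obj X ⟶ G.obj Y := adj.homEquiv _ _ ρ
  have hφ : L.map φ ≫ adj.counit.app Y = ρ := by simp [φ, Adjunction.homEquiv_unit]
  have hκρ : G.map (κ.app (G.obj X) ≫ ρ) = G.map ((monadicAdjunction G).counit.app X) ≫ φ := by
    rw [← Adjunction.leftAdjointUniq_hom_app_counit (monadicAdjunction G) adj]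
    apply (adj.homEquiv _ _).symm.injective
    simp only [Adjunction.homEquiv_counit, Functor.map_comp, Category.assoc, hφ,
      Adjunction.counit_naturality]
    rw [hρ]
  let Φ : (Monad.comparison (monadicAdjunction G)).obj X ⟶
      (Monad.comparison (monadicAdjunction G)).obj Y :=
    { f := φ
      h := by
        change G.map ((monadicLeftAdjoint G).map φ) ≫ G.map ((monadicAdjunction G).counit.app Y)
          = G.map ((monadicAdjunction G).counit.app X) ≫ φ
        rw [← hκρ, ← Adjunction.leftAdjointUniq_hom_app_counit (monadicAdjunction G) adj,
          ← G.map_comp, NatTrans.naturality_assoc, hφ] }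
  refine ⟨(Monad.comparison (monadicAdjunction G)).preimage Φ, ?_⟩
  have hr : G.map ((Monad.comparison (monadicAdjunction G)).preimage Φ) = φ :=
    congrArg Monad.Algebra.Hom.f ((Monad.comparison (monadicAdjunction G)).map_preimage Φ)
  refine (adj.counit_naturality _).symm.trans ?_
  rw [hr, hφ]

theorem IsMonadicExt.exists_desc {F : MorphismProperty C} {A₀ B₀ Z : C} {p : A₀ ⟶ B₀}
    (hp : IsMonadicExt F p) (hA₀ : F (𝟙 A₀)) (hB₀ : F (𝟙 B₀)) (z : Z ⟶ B₀) (hz : F z)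
    (ξ : A₀ ⟶ Z) (hξz : ξ ≫ z = p)
    (hξ : ∀ ⦃T : C⦄ (x₁ x₂ : T ⟶ A₀), x₁ ≫ p = x₂ ≫ p → x₁ ≫ ξ = x₂ ≫ ξ) :
    ∃ r : B₀ ⟶ Z, r ≫ z = 𝟙 B₀ ∧ p ≫ r = ξ := by
  obtain ⟨-, hcomp, G, adj, ⟨mon⟩⟩ := hp
  let X₀ : EOver F B₀ := ⟨Over.mk (𝟙 B₀), hB₀⟩
  let Y : EOver F B₀ := ⟨Over.mk z, hz⟩
  let gx : (G.obj X₀).obj.left ⟶ A₀ := (G.obj X₀).obj.hom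
  let ρ : (eMap F p hcomp).obj (G.obj X₀) ⟶ Y :=
    ObjectProperty.homMk (Over.homMk (gx ≫ ξ) (by
      show (gx ≫ ξ) ≫ z = gx ≫ p
      rw [Category.assoc, hξz]))
  have hρ : adj.counit.app ((eMap F p hcomp).obj (G.obj X₀)) ≫ ρ
      = (eMap F p hcomp).map (G.map (adj.counit.app X₀)) ≫ ρ := by
    apply ObjectProperty.hom_ext
    apply Over.OverMorphism.ext
    let S := (eMap F p hcomp).obj (G.obj X₀)
    have h₁ : (adj.counit.app S).hom.left ≫ gx ≫ p = (G.obj S).obj.hom ≫ p :=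
      Over.w (adj.counit.app S).hom
    have h₂ : (G.map (adj.counit.app X₀)).hom.left ≫ gx = (G.obj S).obj.hom :=
      Over.w (G.map (adj.counit.app X₀)).hom
    change (adj.counit.app S).hom.left ≫ gx ≫ ξ = (G.map (adj.counit.app X₀)).hom.left ≫ gx ≫ ξ
    have := hξ _ _ ((Category.assoc _ _ _).trans h₁)
    rw [← h₂] at this
    exact (Category.assoc _ _ _).symm.trans (this.trans (Category.assoc _ _ _))
  obtain ⟨r, hr⟩ := adj.exists_counit_comp_eq_of_monadic ρ hρ
  -- `gx` is split by the transpose of `p`, viewed as a map `Σ_p (𝟙 A₀) ⟶ 𝟙 B₀`.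
  let jhat : (eMap F p hcomp).obj ⟨Over.mk (𝟙 A₀), hA₀⟩ ⟶ X₀ :=
    ObjectProperty.homMk (Over.homMk p (by
      show p ≫ 𝟙 B₀ = 𝟙 A₀ ≫ p
      simp))
  have hj : (adj.homEquiv _ _ jhat).hom.left ≫ gx = 𝟙 A₀ := Over.w (adj.homEquiv _ _ jhat).hom
  have hε : (adj.counit.app X₀).hom.left = gx ≫ p :=
    (Category.comp_id _).symm.trans (Over.w (adj.counit.app X₀).hom)
  have hrz : r.hom.left ≫ z = 𝟙 B₀ := Over.w r.hom
  refine ⟨r.hom.left, hrz, ?_⟩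
  have hr' : gx ≫ p ≫ r.hom.left = gx ≫ ξ := by
    rw [← Category.assoc, ← hε]
    exact congrArg (fun m => m.hom.left) hr
  simpa [reassoc_of% hj] using (adj.homEquiv _ _ jhat).hom.left ≫= hr'

theorem _root_.CategoryTheory.IsPullback.exists_section_homMk {D' A B C' : C} {t : D' ⟶ A}
    {h : D' ⟶ C'} {f : A ⟶ B} {g : C' ⟶ B} (hpb : IsPullback t h f g) {s : B ⟶ C'}
    (hs : s ≫ g = 𝟙 B) : ∃ τ : Arrow.mk f ⟶ Arrow.mk h, τ ≫ (Arrow.homMk t g hpb.w : Arrow.mk h ⟶ Arrow.mk f) = 𝟙 _ :=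
  ⟨Arrow.homMk (hpb.lift (𝟙 A) (f ≫ s) (by simp [hs])) s (by simp),
    Arrow.hom_ext _ _ (by simp) (by simpa using hs)⟩

namespace GaloisStructure

variable {X : Type u'} [Category.{v'} X] (Γ : GaloisStructure C X)

theorem unitApp_naturality {A B : C} (f : A ⟶ B) :
    f ≫ Γ.unitApp B = Γ.unitApp A ≫ Γ.H.map (Γ.I.map f) :=
  (Γ.adj.unit_naturality f).symm

theorem eq_of_unitApp_comp_eq {A : C} {x : X} {β₁ β₂ : Γ.H.obj (Γ.I.obj A) ⟶ Γ.H.obj x}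
    (h : Γ.unitApp A ≫ β₁ = Γ.unitApp A ≫ β₂) : β₁ = β₂ := by
  have := Γ.hFull
  obtain ⟨γ₁, rfl⟩ := Γ.H.map_surjective β₁
  obtain ⟨γ₂, rfl⟩ := Γ.H.map_surjective β₂
  have hγ : Γ.adj.homEquiv A x γ₁ = Γ.adj.homEquiv A x γ₂ := by
    simpa [Adjunction.homEquiv_unit, unitApp] using h
  rw [(Γ.adj.homEquiv A x).injective hγ]

theorem mem_of_isIso {A B : C} (e : A ⟶ B) [IsIso e] : Γ.E e :=
  Γ.hE1 e trivial trivial inferInstance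

theorem mem_of_isPullback {P A B C' : C} {p₁ : P ⟶ A} {p₂ : P ⟶ C'} {f : A ⟶ B} {g : C' ⟶ B}
    (hP : IsPullback p₁ p₂ f g) (hf : Γ.E f) : Γ.E p₂ :=
  (Γ.hE2 f hf g trivial).2 p₁ p₂ trivial hP

theorem exists_cover {U V T : C} {e : U ⟶ V} (he : Γ.E e) (x : T ⟶ V) :
    ∃ (W : C) (π : W ⟶ T) (y : W ⟶ U), Γ.E π ∧ y ≫ e = π ≫ x := by
  obtain ⟨W, y, π, -, hW, hπ⟩ := (Γ.hE2 e he x trivial).1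
  exact ⟨W, π, y, hπ, hW.w⟩

theorem isIso_of_mono (hM : Γ.CondM) {U V : C} (m : U ⟶ V) (hm : Γ.E m) [Mono m] : IsIso m := by
  obtain ⟨r, hrm, hmr⟩ := (hM m hm).exists_desc (Γ.mem_of_isIso _) (Γ.mem_of_isIso _) m hm (𝟙 U)
    (Category.id_comp m) (fun _ x₁ x₂ h => by simpa using (cancel_mono m).1 h)
  exact ⟨r, hmr, hrm⟩

theorem comp_eq_of_kernelPair_cover (hE4 : CondE4 (fun _ => True) Γ.E) (hM : Γ.CondM)
    {Z Y Y' : C} {e : Z ⟶ Y} (he : Γ.E e) (c : Y ⟶ Y') {K : C} {k₁ k₂ : K ⟶ Z}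
    (hK : IsPullback k₁ k₂ (e ≫ c) (e ≫ c)) {W : C} {π : W ⟶ K} (hπ : Γ.E π)
    (hπe : π ≫ k₁ ≫ e = π ≫ k₂ ≫ e) ⦃T : C⦄ (x₁ x₂ : T ⟶ Z) (hx : x₁ ≫ e ≫ c = x₂ ≫ e ≫ c) :
    x₁ ≫ e = x₂ ≫ e := by
  -- The inclusion `ι` of the kernel pair of `e` into that of `e ≫ c` is covered by `π`,
  -- so it lies in `E` by (E4) and is invertible by (M).
  obtain ⟨L, l₁, l₂, -, hL, -⟩ := (Γ.hE2 e he e trivial).1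
  let ι : L ⟶ K := hK.lift l₁ l₂ (by rw [reassoc_of% hL.w])
  have : Mono ι := ⟨fun a b hab => hL.hom_ext
    (by simpa [ι] using hab =≫ k₁) (by simpa [ι] using hab =≫ k₂)⟩
  let ζ : W ⟶ L := hL.lift (π ≫ k₁) (π ≫ k₂) (by simpa using hπe)
  have hζι : ζ ≫ ι = π := hK.hom_ext (by simp [ι, ζ]) (by simp [ι, ζ])
  have : IsIso ι := Γ.isIso_of_mono hM ι (hE4 ζ ι trivial trivial trivial (hζι ▸ hπ))
  have hk : k₁ ≫ e = k₂ ≫ e := (cancel_epi ι).1 (by simp [ι, hL.w])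
  have := hK.lift x₁ x₂ (by simpa using hx) ≫= hk
  rwa [← Category.assoc, ← Category.assoc, IsPullback.lift_fst, IsPullback.lift_snd] at this

theorem exists_comparison_unitSq (hB : Γ.StronglyBirkhoff) {U V : C} {e : U ⟶ V} (he : Γ.E e) :
    ∃ (P : C) (p₁ : P ⟶ V) (p₂ : P ⟶ Γ.H.obj (Γ.I.obj U)) (ℓ : U ⟶ P),
      IsPullback p₁ p₂ (Γ.unitApp V) (Γ.H.map (Γ.I.map e)) ∧ ℓ ≫ p₁ = e ∧
        ℓ ≫ p₂ = Γ.unitApp U ∧ Γ.E ℓ :=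
  (hB e he).2.2.2.2

theorem mem_unitApp (hB : Γ.StronglyBirkhoff) (A : C) : Γ.E (Γ.unitApp A) :=
  (hB (𝟙 A) (Γ.mem_of_isIso _)).2.2.1

theorem exists_cover_unitApp_lift (hB : Γ.StronglyBirkhoff) {U V : C} {e : U ⟶ V} (he : Γ.E e)
    {T : C} (c : T ⟶ V) (y : T ⟶ U) (hc : c ≫ Γ.unitApp V = y ≫ e ≫ Γ.unitApp V) :
    ∃ (W : C) (π : W ⟶ T) (x : W ⟶ U), Γ.E π ∧ x ≫ e = π ≫ c ∧
      x ≫ Γ.unitApp U = π ≫ y ≫ Γ.unitApp U := by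
  obtain ⟨P, p₁, p₂, ℓ, hP, hℓ₁, hℓ₂, hℓ⟩ := Γ.exists_comparison_unitSq hB he
  obtain ⟨W, π, x, hπ, hx⟩ := Γ.exists_cover hℓ
    (hP.lift c (y ≫ Γ.unitApp U) (by rw [hc, Γ.unitApp_naturality, Category.assoc]))
  refine ⟨W, π, x, hπ, ?_, ?_⟩
  · rw [← hℓ₁, reassoc_of% hx, hP.lift_fst]
  · rw [← hℓ₂, reassoc_of% hx, hP.lift_snd, hℓ₂]

theorem exists_kernelPair_inter_unitApp (hB : Γ.StronglyBirkhoff) {U V : C} {e : U ⟶ V}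
    (he : Γ.E e) :
    ∃ (R : C) (r₁ r₂ : R ⟶ U), Γ.E r₂ ∧ JointlyMono r₁ r₂ ∧
      ∀ ⦃T : C⦄ (x₁ x₂ : T ⟶ U),
        (x₁ ≫ e = x₂ ≫ e ∧ x₁ ≫ Γ.unitApp U = x₂ ≫ Γ.unitApp U) ↔
          ∃ z : T ⟶ R, z ≫ r₁ = x₁ ∧ z ≫ r₂ = x₂ := by
  -- The relation is the kernel pair of the comparison map `ℓ` of the `η`-square at `e`.
  obtain ⟨P, p₁, p₂, ℓ, hP, hℓ₁, hℓ₂, hℓ⟩ := Γ.exists_comparison_unitSq hB he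
  obtain ⟨R, r₁, r₂, -, hR, hr₂⟩ := (Γ.hE2 ℓ hℓ ℓ trivial).1
  refine ⟨R, r₁, r₂, hr₂, fun _ _ _ => hR.hom_ext, fun T x₁ x₂ => ⟨fun ⟨h₁, h₂⟩ => ?_, ?_⟩⟩
  · refine ⟨hR.lift x₁ x₂ (hP.hom_ext ?_ ?_), hR.lift_fst _ _ _, hR.lift_snd _ _ _⟩
    · simpa [hℓ₁] using h₁
    · simpa [hℓ₂] using h₂
  · rintro ⟨z, rfl, rfl⟩
    simp only [Category.assoc, ← hℓ₁, ← hℓ₂, reassoc_of% hR.w, and_self]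

theorem comp_left_eq_of_eq {a b : Arrow C} (φ : a ⟶ b) {T : C} {x₁ x₂ : T ⟶ a.left}
    (h₁ : x₁ ≫ a.hom = x₂ ≫ a.hom) (h₂ : x₁ ≫ Γ.unitApp a.left = x₂ ≫ Γ.unitApp a.left) :
    x₁ ≫ φ.left ≫ b.hom = x₂ ≫ φ.left ≫ b.hom ∧
      x₁ ≫ φ.left ≫ Γ.unitApp b.left = x₂ ≫ φ.left ≫ Γ.unitApp b.left := by
  simp only [Arrow.w, Γ.unitApp_naturality, reassoc_of% h₁, reassoc_of% h₂, and_self]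

theorem exists_cover_of_splitEpi (hE5 : CondE5 Γ.E) (hB : Γ.StronglyBirkhoff) {a b : Arrow C}
    (σ : a ⟶ b) (τ : b ⟶ a) (hτσ : τ ≫ σ = 𝟙 b) (ha : Γ.E a.hom) (hb : Γ.E b.hom) {T : C}
    (x₁ x₂ : T ⟶ a.left) (hx : x₁ ≫ a.hom = x₂ ≫ a.hom)
    (hxη : x₁ ≫ σ.left ≫ Γ.unitApp b.left = x₂ ≫ σ.left ≫ Γ.unitApp b.left) :
    ∃ (W : C) (π : W ⟶ T) (y : W ⟶ a.left), Γ.E π ∧ y ≫ a.hom = π ≫ x₁ ≫ a.hom ∧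
      y ≫ σ.left = π ≫ x₁ ≫ σ.left ∧ y ≫ Γ.unitApp a.left = π ≫ x₂ ≫ Γ.unitApp a.left := by
  obtain ⟨Ra, ra₁, ra₂, hra₂, -, hRa⟩ := Γ.exists_kernelPair_inter_unitApp hB ha
  obtain ⟨Rb, rb₁, rb₂, hrb₂, hRb_mono, hRb⟩ := Γ.exists_kernelPair_inter_unitApp hB hb
  have hra := (hRa ra₁ ra₂).2 ⟨𝟙 _, Category.id_comp _, Category.id_comp _⟩
  obtain ⟨σR, hσR₁, hσR₂⟩ := (hRb (ra₁ ≫ σ.left) (ra₂ ≫ σ.left)).1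
    (by simpa only [Category.assoc] using Γ.comp_left_eq_of_eq σ hra.1 hra.2)
  have hrb := (hRb rb₁ rb₂).2 ⟨𝟙 _, Category.id_comp _, Category.id_comp _⟩
  obtain ⟨τR, hτR₁, hτR₂⟩ := (hRa (rb₁ ≫ τ.left) (rb₂ ≫ τ.left)).1
    (by simpa only [Category.assoc] using Γ.comp_left_eq_of_eq τ hrb.1 hrb.2)
  have hτσ_left : τ.left ≫ σ.left = 𝟙 b.left := by simpa using congrArg CommaMorphism.left hτσ
  let σ' : Arrow.mk ra₂ ⟶ Arrow.mk rb₂ := Arrow.homMk σR σ.left hσR₂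
  let τ' : Arrow.mk rb₂ ⟶ Arrow.mk ra₂ := Arrow.homMk τR τ.left hτR₂
  have hτσ' : τ' ≫ σ' = 𝟙 _ := by
    refine Arrow.hom_ext _ _ (hRb_mono _ _ ?_ ?_) hτσ_left
    · simp [σ', τ', hσR₁, reassoc_of% hτR₁, hτσ_left]
    · simp [σ', τ', hσR₂, reassoc_of% hτR₂, hτσ_left]
  obtain ⟨-, -, -, -, P, p₁, p₂, l, hP, hl₁, hl₂, hl⟩ := hE5 σ' τ' hτσ' hra₂ hrb₂
  replace hP : IsPullback p₁ p₂ σ.left rb₂ := hP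
  replace hl₁ : l ≫ p₁ = ra₂ := hl₁
  replace hl₂ : l ≫ p₂ = σR := hl₂
  obtain ⟨z, hz₁, hz₂⟩ := (hRb (x₁ ≫ σ.left) (x₂ ≫ σ.left)).1
    (by simpa only [Category.assoc, Arrow.w, reassoc_of% hx, true_and] using hxη)
  obtain ⟨W, π, q, hπ, hq⟩ := Γ.exists_cover hl (hP.lift x₂ z hz₂.symm)
  have hq₂ : q ≫ ra₂ = π ≫ x₂ := by simpa [hl₁] using hq =≫ p₁
  refine ⟨W, π, q ≫ ra₁, hπ, ?_, ?_, ?_⟩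
  · rw [Category.assoc, hra.1, reassoc_of% hq₂, hx]
  · simpa [reassoc_of% hl₂, hσR₁, hz₁] using hq =≫ (p₂ ≫ rb₁)
  · rw [Category.assoc, hra.2, reassoc_of% hq₂]

theorem exists_comparison_mem (hE5 : CondE5 Γ.E) {a b : Arrow C} (σ : a ⟶ b) (τ : b ⟶ a)
    (hτσ : τ ≫ σ = 𝟙 b) (ha : Γ.E a.hom) (hb : Γ.E b.hom) {Q : C}
    {q₁ : Q ⟶ Γ.H.obj (Γ.I.obj a.right)} {q₂ : Q ⟶ Γ.H.obj (Γ.I.obj b.left)}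
    (hQ : IsPullback q₁ q₂ (Γ.H.map (Γ.I.map σ.right)) (Γ.H.map (Γ.I.map b.hom))) :
    ∃ c : Γ.H.obj (Γ.I.obj a.left) ⟶ Q, c ≫ q₁ = Γ.H.map (Γ.I.map a.hom) ∧
      c ≫ q₂ = Γ.H.map (Γ.I.map σ.left) ∧ Γ.E c := by
  let HI := (Γ.I ⋙ Γ.H).mapArrow
  obtain ⟨P, p₁, p₂, l, hP, hl₁, hl₂, hl⟩ : ∃ (P : C) (p₁ : P ⟶ Γ.H.obj (Γ.I.obj a.right))
      (p₂ : P ⟶ Γ.H.obj (Γ.I.obj b.left)) (l : Γ.H.obj (Γ.I.obj a.left) ⟶ P),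
      IsPullback p₁ p₂ (Γ.H.map (Γ.I.map σ.right)) (Γ.H.map (Γ.I.map b.hom)) ∧
        l ≫ p₁ = Γ.H.map (Γ.I.map a.hom) ∧ l ≫ p₂ = Γ.H.map (Γ.I.map σ.left) ∧ Γ.E l :=
    (hE5 (HI.map σ) (HI.map τ) (by rw [← Functor.map_comp, hτσ, CategoryTheory.Functor.map_id])
      (Γ.hG _ ha) (Γ.hG _ hb)).2.2.2.2
  refine ⟨l ≫ (hP.isoIsPullback _ _ hQ).hom, ?_, ?_, Γ.hE3 _ _ hl (Γ.mem_of_isIso _)⟩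
  · rw [Category.assoc, IsPullback.isoIsPullback_hom_fst]
    exact hl₁
  · rw [Category.assoc, IsPullback.isoIsPullback_hom_snd]
    exact hl₂

theorem exists_cover_unitApp_eq (hE5 : CondE5 Γ.E) (hB : Γ.StronglyBirkhoff)
    {D' A B C' : C} {t : D' ⟶ A} {h : D' ⟶ C'} {f : A ⟶ B} {g : C' ⟶ B}
    (hpb : IsPullback t h f g) (hf : Γ.E f) {s : B ⟶ C'} (hs : s ≫ g = 𝟙 B) {T : C}
    (k₁ k₂ : T ⟶ D') (hA : k₁ ≫ t ≫ Γ.unitApp A = k₂ ≫ t ≫ Γ.unitApp A)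
    (hC : k₁ ≫ h ≫ Γ.unitApp C' = k₂ ≫ h ≫ Γ.unitApp C') :
    ∃ (W : C) (π : W ⟶ T), Γ.E π ∧ π ≫ k₁ ≫ Γ.unitApp D' = π ≫ k₂ ≫ Γ.unitApp D' := by
  have hh := Γ.mem_of_isPullback hpb hf
  obtain ⟨W₁, π₁, x, hπ₁, hxh, hxη⟩ :=
    Γ.exists_cover_unitApp_lift hB hh (k₁ ≫ h) k₂ (by simpa using hC)
  obtain ⟨τ, hτ⟩ := hpb.exists_section_homMk hs
  let σ : Arrow.mk h ⟶ Arrow.mk f := Arrow.homMk t g hpb.w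
  obtain ⟨W₂, π₂, y, hπ₂, hyh, hyt, hyη⟩ := Γ.exists_cover_of_splitEpi hE5 hB σ τ hτ hh hf
    (π₁ ≫ k₁) x (by simpa [σ] using hxh.symm)
    (by
      change (π₁ ≫ k₁) ≫ t ≫ Γ.unitApp A = x ≫ t ≫ Γ.unitApp A
      rw [Category.assoc, hA, Γ.unitApp_naturality t, reassoc_of% hxη])
  have hy : y = π₂ ≫ π₁ ≫ k₁ := hpb.hom_ext (by simpa [σ] using hyt) (by simpa using hyh)
  exact ⟨W₂, π₂ ≫ π₁, Γ.hE3 _ _ hπ₂ hπ₁, by simpa [hy, hxη] using hyη⟩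

end GaloisStructure

/-- If a Galois structure satisfies (E4), (E5), (M) and (B), then
`I : C ⥤ X` preserves every pullback of a morphism `f ∈ E` along a split
epimorphism `g ∈ E`. -/
theorem statement_12 {C : Type u} [Category.{v} C] {X : Type u'} [Category.{v'} X]
    (Γ : GaloisStructure C X)
    (hE4 : CondE4 (fun _ => True) Γ.E) (hE5 : CondE5 Γ.E)
    (hM : Γ.CondM) (hB : Γ.StronglyBirkhoff) :
    Γ.PreservesSplitPullbacks := by
  intro D' A B C' t h f g hpb hf _ hsplit
  obtain ⟨⟨s, hs⟩⟩ := hsplit.exists_splitEpi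
  obtain ⟨Q, qA, qC, -, hQ, -⟩ :=
    (Γ.hE2 (Γ.H.map (Γ.I.map f)) (Γ.hG f hf) (Γ.H.map (Γ.I.map g)) trivial).1
  obtain ⟨τ, hτ⟩ := hpb.exists_section_homMk hs
  obtain ⟨c, hcC, hcA, hc⟩ : ∃ c : Γ.H.obj (Γ.I.obj D') ⟶ Q,
      c ≫ qC = Γ.H.map (Γ.I.map h) ∧ c ≫ qA = Γ.H.map (Γ.I.map t) ∧ Γ.E c :=
    Γ.exists_comparison_mem hE5 _ τ hτ (Γ.mem_of_isPullback hpb hf) hf hQ.flip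
  have hw : Γ.E (Γ.unitApp D' ≫ c) := Γ.hE3 _ _ (Γ.mem_unitApp hB D') hc
  obtain ⟨K, k₁, k₂, -, hK, -⟩ := (Γ.hE2 _ hw _ trivial).1
  have hKw : k₁ ≫ Γ.unitApp D' ≫ c = k₂ ≫ Γ.unitApp D' ≫ c := hK.w
  obtain ⟨W, π, hπ, hπk⟩ := Γ.exists_cover_unitApp_eq hE5 hB hpb hf hs k₁ k₂
    (by simpa [hcA, Γ.unitApp_naturality] using hKw =≫ qA)
    (by simpa [hcC, Γ.unitApp_naturality] using hKw =≫ qC)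
  obtain ⟨r, hrc, hcr⟩ := (hM _ hw).exists_desc (Γ.mem_of_isIso _) (Γ.mem_of_isIso _) c hc _ rfl
    (Γ.comp_eq_of_kernelPair_cover hE4 hM (Γ.mem_unitApp hB D') c hK hπ hπk)
  have : IsIso c := ⟨r, Γ.eq_of_unitApp_comp_eq (by simpa using hcr), hrc⟩
  have := Γ.hFull
  have := Γ.hFaithful
  exact IsPullback.of_map_of_faithful Γ.H <| hQ.of_iso (asIso c).symm (Iso.refl _)
    (Iso.refl _) (Iso.refl _) (by simp [hcA]) (by simp [hcC]) (by simp) (by simp)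

end GaloisPaper
end

section
/- Let C be a category with finite limits and E a class of morphisms satisfying (E1)-(E5): contains isomorphisms, pullback-stable, closed under composition, right-cancellable (g∘f ∈ E implies g ∈ E), and every split epimorphism of Ext(C) lies in E¹. Then E¹, as a class of morphisms of Ext(C), satisfies (E1)-(E5) as well (with (E¹)¹ in place of E¹). -/
/-!
A square `σ : a ⟶ b` with all four sides in `E` lies in `E¹` exactly when its gap
`a.left ⟶ a.right ×_{b.right} b.left` lies in `E`; as `E` contains the isomorphisms, any pullback
may be used. Pullbacks in `Arrow C` are computed componentwise, the gap of a pulled-back square is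
a pullback of the original gap, and the gap of a composite of squares is the gap of the first
followed by a pullback of the gap of the second: this gives (E2) and (E3) for `E¹`. Isomorphisms are
split epimorphisms, so (E1) follows from (E5). For (E4), pulling `σ ≫ τ` back along `τ` yields a
projection split by `(𝟙, σ)`, hence in `E¹`; composing reduces to the case `σ ∈ E¹`, where (E4)
for `E` applies to the gaps. For (E5), a split epimorphism `σ` of double extensions has split
faces and induces a split square `gapFunctor.map σ` between the gaps of its source and target;
the gap of the comparison map of the cube `σ` is the gap of that square, so it lies in `E`.
-/

open CategoryTheory CategoryTheory.Limits

universe v u v' u'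

namespace GaloisPaper

variable {C : Type u} [Category.{v} C]

theorem Arrow.w_left {X Y : Arrow (Arrow C)} (φ : X ⟶ Y) :
    φ.left.left ≫ Y.hom.left = X.hom.left ≫ φ.right.left := by
  simpa only [Arrow.comp_left] using congrArg (·.left) (Arrow.w φ)

theorem Arrow.w_right {X Y : Arrow (Arrow C)} (φ : X ⟶ Y) :
    φ.left.right ≫ Y.hom.right = X.hom.right ≫ φ.right.right := by
  simpa only [Arrow.comp_right] using congrArg (·.right) (Arrow.w φ)

section Gaps

variable {E : MorphismProperty C}

theorem inE1_iff_of_isPullback [E.RespectsIso] {a b : Arrow C} (σ : a ⟶ b) {P : C}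
    {p₁ : P ⟶ a.right} {p₂ : P ⟶ b.left} (hP : IsPullback p₁ p₂ σ.right b.hom)
    {l : a.left ⟶ P} (h₁ : l ≫ p₁ = a.hom) (h₂ : l ≫ p₂ = σ.left) :
    InE1 E σ ↔ E a.hom ∧ E b.hom ∧ E σ.left ∧ E σ.right ∧ E l := by
  refine ⟨fun ⟨ha, hb, hl, hr, _, _, _, l', hP', h₁', h₂', hl'⟩ ↦ ⟨ha, hb, hl, hr, ?_⟩,
    fun ⟨ha, hb, hl, hr, hl'⟩ ↦ ⟨ha, hb, hl, hr, P, p₁, p₂, l, hP, h₁, h₂, hl'⟩⟩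
  have : l = l' ≫ (hP'.isoIsPullback _ _ hP).hom :=
    hP.hom_ext (by simp [h₁, h₁']) (by simp [h₂, h₂'])
  exact this ▸ MorphismProperty.RespectsIso.postcomp E _ _ hl'

variable [HasPullbacks C]

noncomputable def gap {a b : Arrow C} (σ : a ⟶ b) : a.left ⟶ pullback σ.right b.hom :=
  pullback.lift a.hom σ.left (Arrow.w σ).symm

theorem gap_fst {a b : Arrow C} (σ : a ⟶ b) : gap σ ≫ pullback.fst _ _ = a.hom :=
  pullback.lift_fst _ _ _

theorem gap_snd {a b : Arrow C} (σ : a ⟶ b) : gap σ ≫ pullback.snd _ _ = σ.left :=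
  pullback.lift_snd _ _ _

theorem InE1.gap_mem [E.RespectsIso] {a b : Arrow C} {σ : a ⟶ b} (hσ : InE1 E σ) :
    E (gap σ) :=
  ((inE1_iff_of_isPullback σ (.of_hasPullback _ _) (gap_fst σ) (gap_snd σ)).1 hσ).2.2.2.2

noncomputable def gapMap {X Y : Arrow (Arrow C)} (φ : X ⟶ Y) :
    pullback X.hom.right X.right.hom ⟶ pullback Y.hom.right Y.right.hom :=
  pullback.lift (pullback.fst _ _ ≫ φ.left.right) (pullback.snd _ _ ≫ φ.right.left) (by
    rw [Category.assoc, Category.assoc, Arrow.w_right, Arrow.w φ.right, pullback.condition_assoc])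

@[simp]
theorem gapMap_fst {X Y : Arrow (Arrow C)} (φ : X ⟶ Y) :
    gapMap φ ≫ pullback.fst _ _ = pullback.fst _ _ ≫ φ.left.right :=
  pullback.lift_fst _ _ _

@[simp]
theorem gapMap_snd {X Y : Arrow (Arrow C)} (φ : X ⟶ Y) :
    gapMap φ ≫ pullback.snd _ _ = pullback.snd _ _ ≫ φ.right.left :=
  pullback.lift_snd _ _ _

theorem gap_comp_gapMap {X Y : Arrow (Arrow C)} (φ : X ⟶ Y) :
    gap X.hom ≫ gapMap φ = φ.left.left ≫ gap Y.hom := by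
  apply pullback.hom_ext
  · rw [Category.assoc, gapMap_fst, reassoc_of% (gap_fst X.hom), Category.assoc, gap_fst,
      Arrow.w φ.left]
  · rw [Category.assoc, gapMap_snd, reassoc_of% (gap_snd X.hom), Category.assoc, gap_snd,
      Arrow.w_left]

noncomputable def gapFunctor : Arrow (Arrow C) ⥤ Arrow C where
  obj X := Arrow.mk (gap X.hom)
  map φ := Arrow.homMk' φ.left.left (gapMap φ) (gap_comp_gapMap φ).symm
  map_id X := by
    ext
    · rfl
    · exact pullback.hom_ext (by simp [-Arrow.w]) (by simp [-Arrow.w])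
  map_comp φ ψ := by
    ext
    · rfl
    · exact pullback.hom_ext (by simp [-Arrow.w, reassoc_of% (gapMap_fst φ)])
        (by simp [-Arrow.w, reassoc_of% (gapMap_snd φ)])

end Gaps

section ArrowPullbacks

theorem Arrow.isPullback_of_isPullback_left_right {d a b c : Arrow C} {t : d ⟶ a} {s : d ⟶ c}
    {f : a ⟶ b} {g : c ⟶ b} (hL : IsPullback t.left s.left f.left g.left)
    (hR : IsPullback t.right s.right f.right g.right) : IsPullback t s f g := by
  refine .mk' (Arrow.hom_ext _ _ hL.w hR.w)
    (fun _ φ φ' h₁ h₂ ↦ Arrow.hom_ext _ _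
      (hL.hom_ext (congrArg (·.left) h₁) (congrArg (·.left) h₂))
      (hR.hom_ext (congrArg (·.right) h₁) (congrArg (·.right) h₂)))
    (fun x u v w ↦ ?_)
  have wL : u.left ≫ f.left = v.left ≫ g.left := by
    simpa only [Arrow.comp_left] using congrArg (·.left) w
  have wR : u.right ≫ f.right = v.right ≫ g.right := by
    simpa only [Arrow.comp_right] using congrArg (·.right) w
  refine ⟨Arrow.homMk (hL.lift _ _ wL) (hR.lift _ _ wR) (hR.hom_ext ?_ ?_),
    Arrow.hom_ext _ _ (hL.lift_fst _ _ _) (hR.lift_fst _ _ _),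
    Arrow.hom_ext _ _ (hL.lift_snd _ _ _) (hR.lift_snd _ _ _)⟩
  · rw [Category.assoc, Category.assoc, ← Arrow.w t, hL.lift_fst_assoc, Arrow.w u, hR.lift_fst]
  · rw [Category.assoc, Category.assoc, ← Arrow.w s, hL.lift_snd_assoc, Arrow.w v, hR.lift_snd]

variable [HasPullbacks C] {a b c : Arrow C} (f : a ⟶ b) (g : c ⟶ b)

-- Reducible, so that its components are syntactically `pullback f.left g.left` and
-- `pullback f.right g.right`.
noncomputable abbrev pullbackArrow : Arrow C :=
  Arrow.mk (pullback.lift (f := f.right) (g := g.right) (pullback.fst f.left g.left ≫ a.hom)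
    (pullback.snd f.left g.left ≫ c.hom)
    (by simp only [Category.assoc, ← Arrow.w f, ← Arrow.w g, pullback.condition_assoc]))

noncomputable def pullbackArrow.fst : pullbackArrow f g ⟶ a :=
  Arrow.homMk (pullback.fst _ _) (pullback.fst _ _) (pullback.lift_fst _ _ _).symm

noncomputable def pullbackArrow.snd : pullbackArrow f g ⟶ c :=
  Arrow.homMk (pullback.snd _ _) (pullback.snd _ _) (pullback.lift_snd _ _ _).symm

theorem pullbackArrow.isPullback :
    IsPullback (pullbackArrow.fst f g) (pullbackArrow.snd f g) f g :=
  Arrow.isPullback_of_isPullback_left_right (.of_hasPullback _ _) (.of_hasPullback _ _)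

theorem pullbackArrow.hom_fst :
    (pullbackArrow f g).hom ≫ pullback.fst f.right g.right = pullback.fst f.left g.left ≫ a.hom :=
  pullback.lift_fst _ _ _

theorem pullbackArrow.hom_snd :
    (pullbackArrow f g).hom ≫ pullback.snd f.right g.right = pullback.snd f.left g.left ≫ c.hom :=
  pullback.lift_snd _ _ _

variable {f g}

theorem Arrow.isPullback_iff {d : Arrow C} {t : d ⟶ a} {s : d ⟶ c} :
    IsPullback t s f g ↔
      IsPullback t.left s.left f.left g.left ∧ IsPullback t.right s.right f.right g.right := by
  refine ⟨fun h ↦ ?_, fun h ↦ Arrow.isPullback_of_isPullback_left_right h.1 h.2⟩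
  let e := h.isoIsPullback _ _ (pullbackArrow.isPullback f g)
  have h₁ : e.hom ≫ pullbackArrow.fst f g = t := h.isoIsPullback_hom_fst _ _ _
  have h₂ : e.hom ≫ pullbackArrow.snd f g = s := h.isoIsPullback_hom_snd _ _ _
  exact ⟨.of_iso_pullback ⟨congrArg (·.left) h.w⟩ (Arrow.leftFunc.mapIso e)
      (congrArg (·.left) h₁) (congrArg (·.left) h₂),
    .of_iso_pullback ⟨congrArg (·.right) h.w⟩ (Arrow.rightFunc.mapIso e)
      (congrArg (·.right) h₁) (congrArg (·.right) h₂)⟩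

end ArrowPullbacks

section ClosureProperties

variable {E : MorphismProperty C} [HasPullbacks C] [E.IsStableUnderBaseChange]
  [E.IsStableUnderComposition]

theorem inE1_of_isPullback {d a b c : Arrow C} {t : d ⟶ a} {s : d ⟶ c} {σ : a ⟶ b} {g : c ⟶ b}
    (h : IsPullback t s σ g) (hσ : InE1 E σ) (hc : E c.hom) : InE1 E s := by
  obtain ⟨hL, hR⟩ := Arrow.isPullback_iff.1 h
  obtain ⟨-, -, hσL, hσR, P, p₁, p₂, l, hP, hl₁, hl₂, hl⟩ := hσ
  have hQ := IsPullback.of_hasPullback s.right c.hom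
  have hQP : IsPullback (pullback.fst _ _ ≫ t.right) (pullback.snd _ _) σ.right
      (g.left ≫ b.hom) :=
    Arrow.w g ▸ hQ.paste_horiz hR
  let k : pullback s.right c.hom ⟶ P :=
    hP.lift (pullback.fst _ _ ≫ t.right) (pullback.snd _ _ ≫ g.left)
      (by rw [hQP.w, Category.assoc])
  have hk : IsPullback k (pullback.snd _ _) p₂ g.left :=
    .of_right (by rwa [hP.lift_fst]) (hP.lift_snd _ _ _) hP
  have hgap : IsPullback t.left (gap s) l k := by
    refine .of_bot (by rwa [gap_snd, hl₂]) (hP.hom_ext ?_ ?_) hk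
    · rw [Category.assoc, hl₁, Category.assoc, hP.lift_fst, reassoc_of% (gap_fst s), Arrow.w t]
    · rw [Category.assoc, hl₂, Category.assoc, hP.lift_snd, reassoc_of% (gap_snd s), hL.w]
  have hfst : E (pullback.fst s.right c.hom) := E.of_isPullback hQ.flip hc
  exact ⟨gap_fst s ▸ E.comp_mem _ _ (E.of_isPullback hgap hl) hfst, hc, E.of_isPullback hL hσL,
    E.of_isPullback hR hσR, _, _, _, gap s, hQ, gap_fst s, gap_snd s, E.of_isPullback hgap hl⟩

theorem inE1_comp {a b c : Arrow C} {σ : a ⟶ b} {τ : b ⟶ c} (hσ : InE1 E σ) (hτ : InE1 E τ) :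
    InE1 E (σ ≫ τ) := by
  obtain ⟨ha, -, hσL, hσR, Pσ, pσ₁, pσ₂, lσ, hPσ, hσ₁, hσ₂, hlσ⟩ := hσ
  obtain ⟨-, hc, hτL, hτR, Pτ, pτ₁, pτ₂, lτ, hPτ, hτ₁, hτ₂, hlτ⟩ := hτ
  have hPm := IsPullback.of_hasPullback σ.right pτ₁
  let n : Pσ ⟶ pullback σ.right pτ₁ :=
    pullback.lift pσ₁ (pσ₂ ≫ lτ) (by rw [Category.assoc, hτ₁, hPσ.w])
  have hn : IsPullback n pσ₂ (pullback.snd _ _) lτ :=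
    .of_right (by rwa [pullback.lift_fst, hτ₁]) (pullback.lift_snd _ _ _) hPm
  refine ⟨ha, hc, E.comp_mem _ _ hσL hτL, E.comp_mem _ _ hσR hτR, _, _, _, lσ ≫ n,
    hPm.paste_vert hPτ, ?_, ?_, E.comp_mem _ _ hlσ (E.of_isPullback hn.flip hlτ)⟩
  · rw [Category.assoc, pullback.lift_fst, hσ₁]
  · rw [Category.assoc, pullback.lift_snd_assoc, Category.assoc, hτ₂, reassoc_of% hσ₂,
      Arrow.comp_left]

theorem inE1_of_inE1_comp [E.HasOfPrecompProperty E] {a b c : Arrow C} {σ : a ⟶ b} {τ : b ⟶ c}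
    (hσ : InE1 E σ) (hστ : InE1 E (σ ≫ τ)) : InE1 E τ := by
  obtain ⟨-, hb, hσL, hσR, -⟩ := hσ
  obtain ⟨-, hc, hστL, hστR, P, p₁, p₂, l, hP, h₁, h₂, hl⟩ := hστ
  let n : P ⟶ pullback τ.right c.hom :=
    pullback.lift (p₁ ≫ σ.right) p₂ (by rw [Category.assoc]; exact hP.w)
  have hn : IsPullback p₁ n σ.right (pullback.fst _ _) :=
    .of_bot (by rwa [pullback.lift_snd]) (pullback.lift_fst _ _ _).symm (.of_hasPullback _ _)
  have hln : l ≫ n = σ.left ≫ gap τ := by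
    apply pullback.hom_ext
    · rw [Category.assoc, pullback.lift_fst, reassoc_of% h₁, Category.assoc, gap_fst, Arrow.w σ]
    · rw [Category.assoc, pullback.lift_snd, h₂, Category.assoc, gap_snd, Arrow.comp_left]
  have hgap : E (gap τ) :=
    E.of_precomp _ _ hσL (hln ▸ E.comp_mem _ _ hl (E.of_isPullback hn hσR))
  exact ⟨hb, hc, E.of_precomp _ _ hσL hστL, E.of_precomp _ _ hσR hστR, _, _, _, gap τ,
    .of_hasPullback _ _, gap_fst τ, gap_snd τ, hgap⟩

end ClosureProperties

section Cubes

variable [HasPullbacks C] {a b : Arrow (Arrow C)}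

noncomputable def arrowGap (σ : a ⟶ b) : a.left ⟶ pullbackArrow σ.right b.hom :=
  Arrow.homMk (pullback.lift a.hom.left σ.left.left (Arrow.w_left σ).symm)
    (pullback.lift a.hom.right σ.left.right (Arrow.w_right σ).symm) (by
      apply pullback.hom_ext
      · rw [Category.assoc, pullbackArrow.hom_fst, pullback.lift_fst_assoc, Category.assoc,
          pullback.lift_fst, Arrow.w a.hom]
      · rw [Category.assoc, pullbackArrow.hom_snd, pullback.lift_snd_assoc, Category.assoc,
          pullback.lift_snd, Arrow.w σ.left])

theorem arrowGap_fst (σ : a ⟶ b) : arrowGap σ ≫ pullbackArrow.fst σ.right b.hom = a.hom :=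
  Arrow.hom_ext _ _ (pullback.lift_fst _ _ _) (pullback.lift_fst _ _ _)

theorem arrowGap_snd (σ : a ⟶ b) : arrowGap σ ≫ pullbackArrow.snd σ.right b.hom = σ.left :=
  Arrow.hom_ext _ _ (pullback.lift_snd _ _ _) (pullback.lift_snd _ _ _)

-- Both pullbacks are limits of the cube `σ` with its initial vertex removed; this identifies the
-- gap of `arrowGap σ` with the gap of `gapFunctor.map σ`.
theorem isPullback_gapMap (σ : a ⟶ b) :
    IsPullback (pullback.fst (gapMap σ) (gap b.hom) ≫ pullback.fst _ _)
      (pullback.lift (pullback.fst (gapMap σ) (gap b.hom) ≫ pullback.snd _ _) (pullback.snd _ _)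
        (by rw [Category.assoc, ← gapMap_snd, ← gap_snd b.hom, pullback.condition_assoc]))
      (arrowGap σ).right (pullbackArrow σ.right b.hom).hom := by
  have hcond := pullback.condition (f := gapMap σ) (g := gap b.hom)
  refine .mk' ?_ (fun _ φ φ' h₁ h₂ ↦ ?_) (fun _ u v w ↦ ?_)
  · apply pullback.hom_ext
    · simp only [arrowGap, Arrow.homMk_right, Category.assoc, pullback.lift_fst,
        pullbackArrow.hom_fst, pullback.lift_fst_assoc, pullback.condition]
    · simp only [arrowGap, Arrow.homMk_right, Category.assoc, pullback.lift_snd,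
        pullbackArrow.hom_snd, pullback.lift_snd_assoc, ← gapMap_fst, reassoc_of% hcond, gap_fst]
  · have h₂L := h₂ =≫ pullback.fst _ _
    have h₂R := h₂ =≫ pullback.snd _ _
    simp only [Category.assoc, pullback.lift_fst, pullback.lift_snd] at h₁ h₂L h₂R
    exact pullback.hom_ext (pullback.hom_ext (by simpa only [Category.assoc])
      (by simpa only [Category.assoc])) h₂R
  · have wF := w =≫ pullback.fst _ _
    have wS := w =≫ pullback.snd _ _
    simp only [arrowGap, Arrow.homMk_right, Category.assoc, pullback.lift_fst, pullback.lift_snd,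
      pullbackArrow.hom_fst, pullbackArrow.hom_snd] at wF wS
    let m : _ ⟶ pullback a.hom.right a.right.hom :=
      pullback.lift u (v ≫ pullback.fst _ _) (by rw [wF, Category.assoc])
    refine ⟨pullback.lift m (v ≫ pullback.snd _ _) (pullback.hom_ext ?_ ?_), ?_, ?_⟩
    · simp only [m, Category.assoc, gapMap_fst, pullback.lift_fst_assoc, gap_fst, wS]
    · simp only [m, Category.assoc, gapMap_snd, pullback.lift_snd_assoc, gap_snd,
        pullback.condition]
    · simp only [m, pullback.lift_fst_assoc, pullback.lift_fst]
    · apply pullback.hom_ext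
      · simp only [m, Category.assoc, pullback.lift_fst, pullback.lift_fst_assoc,
          pullback.lift_snd]
      · simp only [m, Category.assoc, pullback.lift_snd]

theorem inE1_arrowGap_iff {E : MorphismProperty C} [E.RespectsIso] (σ : a ⟶ b) :
    InE1 E (arrowGap σ) ↔ E a.left.hom ∧ E (pullbackArrow σ.right b.hom).hom ∧
      E (arrowGap σ).left ∧ E (arrowGap σ).right ∧ E (gap (gapFunctor.map σ)) := by
  refine inE1_iff_of_isPullback _ (isPullback_gapMap σ)
    (l := pullback.lift (gap a.hom) σ.left.left (gap_comp_gapMap σ)) ?_ ?_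
  · rw [pullback.lift_fst_assoc, gap_fst]
  · apply pullback.hom_ext
    · rw [Category.assoc, pullback.lift_fst, pullback.lift_fst_assoc, gap_snd]
      exact (pullback.lift_fst _ _ _).symm
    · rw [Category.assoc, pullback.lift_snd, pullback.lift_snd]
      exact (pullback.lift_snd _ _ _).symm

end Cubes

section Conditions

variable {E : MorphismProperty C}

theorem condE1_inE1 (hE5 : CondE5 E) : CondE1 (fun x : Arrow C ↦ E x.hom) (InE1 E) :=
  fun _ _ σ ha hb _ ↦ hE5 σ (inv σ) (IsIso.inv_hom_id σ) ha hb

variable [HasPullbacks C] [E.IsStableUnderBaseChange] [E.IsStableUnderComposition]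

theorem condE2_inE1 : CondE2 (fun x : Arrow C ↦ E x.hom) (InE1 E) := by
  intro a b σ hσ c g hc
  have hsnd := inE1_of_isPullback (pullbackArrow.isPullback σ g) hσ hc
  exact ⟨⟨_, _, _, hsnd.1, pullbackArrow.isPullback σ g, hsnd⟩,
    fun _ _ _ _ h ↦ inE1_of_isPullback h hσ hc⟩

theorem condE3_inE1 : CondE3 (InE1 E) :=
  fun _ _ _ _ _ hσ hτ ↦ inE1_comp hσ hτ

theorem condE4_inE1 [E.HasOfPrecompProperty E] (hE5 : CondE5 E) :
    CondE4 (fun x : Arrow C ↦ E x.hom) (InE1 E) := by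
  intro a b c σ τ ha hb _ hστ
  have h := pullbackArrow.isPullback (σ ≫ τ) τ
  have hsnd := inE1_of_isPullback h hστ hb
  have hfst : InE1 E (pullbackArrow.fst (σ ≫ τ) τ) :=
    hE5 _ (h.lift (𝟙 a) σ (Category.id_comp _)) (h.lift_fst _ _ _) hsnd.1 ha
  exact inE1_of_inE1_comp hsnd (h.w ▸ inE1_comp hfst hστ)

theorem condE5_inE1 [E.RespectsIso] (hE5 : CondE5 E) : CondE5 (InE1 E) := by
  intro a b σ τ hτσ ha hb
  have split (F : Arrow (Arrow C) ⥤ Arrow C) : F.map τ ≫ F.map σ = 𝟙 _ := by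
    rw [← F.map_comp, hτσ, F.map_id]
  have hσL := hE5 _ _ (split Arrow.leftFunc) ha.1 hb.1
  have hσR := hE5 _ _ (split Arrow.rightFunc) ha.2.1 hb.2.1
  have hL := hE5 _ _ (split Arrow.leftFunc.mapArrow) ha.2.2.1 hb.2.2.1
  have hR := hE5 _ _ (split Arrow.rightFunc.mapArrow) ha.2.2.2.1 hb.2.2.2.1
  have hgap := hE5 _ _ (split gapFunctor) ha.gap_mem hb.gap_mem
  refine ⟨ha, hb, hσL, hσR, _, _, _, arrowGap σ, pullbackArrow.isPullback _ _, arrowGap_fst σ,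
    arrowGap_snd σ, (inE1_arrowGap_iff σ).2 ⟨ha.1, ?_, hL.gap_mem, hR.gap_mem, hgap.gap_mem⟩⟩
  exact (inE1_of_isPullback (pullbackArrow.isPullback _ _) hσR hb.1).1

end Conditions

/-- If a class `E` on a finitely complete category satisfies
(E1)-(E5), then the class `E¹` of double extensions, as a class of morphisms of
`Ext(C)` (here: of the arrow category, with objecthood given by `E`), also
satisfies (E1)-(E5), with `(E¹)¹` in place of `E¹` in condition (E5). -/
theorem statement_13 {C : Type u} [Category.{v} C] [HasFiniteLimits C]
    (E : MorphismProperty C)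
    (hE1 : CondE1 (fun _ => True) E) (hE2 : CondE2 (fun _ => True) E)
    (hE3 : CondE3 E) (hE4 : CondE4 (fun _ => True) E) (hE5 : CondE5 E) :
    CondE1 (fun x : Arrow C => E x.hom) (InE1 E) ∧
      CondE2 (fun x : Arrow C => E x.hom) (InE1 E) ∧
      CondE3 (InE1 E) ∧
      CondE4 (fun x : Arrow C => E x.hom) (InE1 E) ∧
      CondE5 (InE1 E) := by
  have : E.IsStableUnderComposition := ⟨fun f g ↦ hE3 f g⟩
  have : E.IsStableUnderBaseChange := ⟨fun h hg ↦ (hE2 _ hg _ trivial).2 _ _ trivial h⟩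
  have : E.HasOfPrecompProperty E := ⟨fun f g _ h ↦ hE4 f g trivial trivial trivial h⟩
  have : E.RespectsIso := MorphismProperty.respectsIso_of_isStableUnderComposition
    fun _ _ f hf ↦ hE1 f trivial trivial hf
  exact ⟨condE1_inE1 hE5, condE2_inE1, condE3_inE1, condE4_inE1 hE5, condE5_inE1 hE5⟩

end GaloisPaper
end
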